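/- There exists a constant c > 0 such that for every n, every p ≤ 2/n, and every positive integer t, the exploration process of G(n,p) satisfies P( N_t ≤ n − 5t ) ≤ e^{−c t}. -/

import Mathlib

open MeasureTheory Finset Filter

noncomputable def bernoulliMeasure (p : ℝ) : Measure Bool :=
  (ENNReal.ofReal p) • Measure.dirac true + (ENNReal.ofReal (1 - p)) • Measure.dirac false

instance (p : ℝ) : IsFiniteMeasure (bernoulliMeasure p) := by
  constructor
  simp only [bernoulliMeasure, Measure.add_apply, Measure.smul_apply, smul_eq_mul,
    Measure.dirac_apply' _ MeasurableSet.univ, Set.indicator_univ, Pi.one_apply, mul_one]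
  exact ENNReal.add_lt_top.2 ⟨ENNReal.ofReal_lt_top, ENNReal.ofReal_lt_top⟩

noncomputable def gnp (n : ℕ) (p : ℝ) : Measure (Sym2 (Fin n) → Bool) :=
  Measure.pi fun _ => bernoulliMeasure p

def graphOfConfig {n : ℕ} (ω : Sym2 (Fin n) → Bool) : SimpleGraph (Fin n) where
  Adj v w := v ≠ w ∧ ω s(v, w) = true
  symm := ⟨fun v w h => ⟨h.1.symm, by rw [Sym2.eq_swap]; exact h.2⟩⟩
  loopless := ⟨fun v h => h.1 rfl⟩

noncomputable def nthLargestCompSize {V : Type*} (G : SimpleGraph V) (l : ℕ) : ℕ :=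
  sSup {k : ℕ | l ≤ {c : G.ConnectedComponent | k ≤ c.supp.ncard}.ncard}

inductive VStatus where
  | explored : VStatus
  | active : VStatus
  | neutral : VStatus
deriving DecidableEq

def exploreTarget {n : ℕ} (σ : Fin n → VStatus) : Option (Fin n) :=
  let act := Finset.univ.filter fun v => σ v = VStatus.active
  let neu := Finset.univ.filter fun v => σ v = VStatus.neutral
  if ha : act.Nonempty then some (act.min' ha)
  else if hn : neu.Nonempty then some (neu.min' hn)
  else none

open scoped Classical in
noncomputable def exploreStep {n : ℕ} (G : SimpleGraph (Fin n)) (σ : Fin n → VStatus) :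
    Fin n → VStatus :=
  match exploreTarget σ with
  | none => σ
  | some w => fun v =>
      if v = w then VStatus.explored
      else if σ v = VStatus.neutral ∧ G.Adj w v then VStatus.active
      else σ v

noncomputable def exploreState {n : ℕ} (G : SimpleGraph (Fin n)) (t : ℕ) : Fin n → VStatus :=
  (exploreStep G)^[t] (fun v => if v.val = 0 then VStatus.active else VStatus.neutral)

noncomputable def activeCount {n : ℕ} (G : SimpleGraph (Fin n)) (t : ℕ) : ℕ :=
  (Finset.univ.filter fun v => exploreState G t v = VStatus.active).card

noncomputable def neutralCount {n : ℕ} (G : SimpleGraph (Fin n)) (t : ℕ) : ℕ :=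
  (Finset.univ.filter fun v => exploreState G t v = VStatus.neutral).card

open scoped Classical in
noncomputable def etaVal {n : ℕ} (G : SimpleGraph (Fin n)) (t : ℕ) : ℕ :=
  match exploreTarget (exploreState G (t - 1)) with
  | none => 0
  | some w => (Finset.univ.filter fun v =>
      exploreState G (t - 1) v = VStatus.neutral ∧ G.Adj w v).card

/-!
Let `Y_t = n - N_t` be the number of non-neutral vertices. Step `t + 1` turns the explored vertex
and its `η_{t+1}` neutral neighbours non-neutral, so `Y_{t+1} ≤ Y_t + 1 + η_{t+1}`; the edges it
examines have not been revealed before, so given the past `η_{t+1}` is dominated by `Bin(n, p)` and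
`E[2 ^ Y_{t+1}] ≤ 2 (1 + p) ^ n E[2 ^ Y_t]`. With `pn ≤ 2` this gives `E[2 ^ Y_t] ≤ 2 (2 e²) ^ t`,
and Markov's inequality gives `P(Y_t ≥ 5t) ≤ 2 (e² / 16) ^ t`.

The conditioning is done on cylinders: configurations are grouped by their values on the edges
revealed up to time `t`, and the exploration up to time `t` is the same throughout a group.
-/

section ProductWeight

variable {E : Type*} [Fintype E]

def bernoulliWeight (p : ℝ) (b : Bool) : ℝ := if b then p else 1 - p

noncomputable def productWeight (p : ℝ) (ω : E → Bool) : ℝ := ∏ e, bernoulliWeight p (ω e)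

lemma bernoulliWeight_nonneg {p : ℝ} (hp0 : 0 ≤ p) (hp1 : p ≤ 1) (b : Bool) :
    0 ≤ bernoulliWeight p b := by
  cases b <;> simp [bernoulliWeight, hp0, hp1]

lemma productWeight_nonneg {p : ℝ} (hp0 : 0 ≤ p) (hp1 : p ≤ 1) (ω : E → Bool) :
    0 ≤ productWeight p ω :=
  prod_nonneg fun e _ => bernoulliWeight_nonneg hp0 hp1 (ω e)

lemma pi_bernoulliMeasure_finset {p : ℝ} (hp0 : 0 ≤ p) (hp1 : p ≤ 1) (A : Finset (E → Bool)) :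
    Measure.pi (fun _ : E => bernoulliMeasure p) A =
      ENNReal.ofReal (∑ ω ∈ A, productWeight p ω) := by
  have hsingle : ∀ ω : E → Bool,
      Measure.pi (fun _ : E => bernoulliMeasure p) {ω} = ENNReal.ofReal (productWeight p ω) := by
    intro ω
    rw [← Set.univ_pi_singleton ω, Measure.pi_pi, productWeight,
      ENNReal.ofReal_prod_of_nonneg fun e _ => bernoulliWeight_nonneg hp0 hp1 (ω e)]
    refine prod_congr rfl fun e _ => ?_
    cases ω e <;> simp [bernoulliMeasure, bernoulliWeight]
  rw [← sum_measure_singleton, ENNReal.ofReal_sum_of_nonneg fun ω _ =>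
    productWeight_nonneg hp0 hp1 ω]
  exact sum_congr rfl fun ω _ => hsingle ω

variable [DecidableEq E]

def cylinderFinset (R : Finset E) (b : E → Bool) : Finset (E → Bool) :=
  univ.filter fun ω => ∀ e ∈ R, ω e = b e

lemma mem_cylinderFinset {R : Finset E} {b ω : E → Bool} :
    ω ∈ cylinderFinset R b ↔ ∀ e ∈ R, ω e = b e := by
  simp [cylinderFinset]

lemma sum_cylinderFinset_prod {M : Type*} [CommSemiring M] (R : Finset E) (b : E → Bool)
    (g : E → Bool → M) :
    ∑ ω ∈ cylinderFinset R b, ∏ e, g e (ω e) =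
      ∏ e, if e ∈ R then g e (b e) else g e true + g e false := by
  let g' : E → Bool → M := fun e x => if e ∈ R ∧ x ≠ b e then 0 else g e x
  have hg' : ∀ ω : E → Bool,
      (if ∀ e ∈ R, ω e = b e then ∏ e, g e (ω e) else 0) = ∏ e, g' e (ω e) := by
    intro ω
    split_ifs with hω
    · exact prod_congr rfl fun e _ => by simp +contextual [g', hω e]
    · push Not at hω
      obtain ⟨e, he, hne⟩ := hω
      exact (prod_eq_zero (mem_univ e) (by simp [g', he, hne])).symm
  rw [cylinderFinset, sum_filter, Fintype.sum_congr _ _ hg', ← Fintype.prod_sum]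
  refine prod_congr rfl fun e _ => ?_
  by_cases he : e ∈ R <;> cases hb : b e <;> simp [g', he, hb]

lemma sum_productWeight (p : ℝ) : ∑ ω : E → Bool, productWeight p ω = 1 := by
  have := sum_cylinderFinset_prod (∅ : Finset E) (fun _ => true) fun _ x => bernoulliWeight p x
  simpa [cylinderFinset, productWeight, bernoulliWeight] using this

lemma sum_cylinderFinset_productWeight_mul_two_pow {R S : Finset E} (hRS : Disjoint R S)
    (b : E → Bool) (p : ℝ) :
    ∑ ω ∈ cylinderFinset R b, productWeight p ω * 2 ^ #{e ∈ S | ω e = true} =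
      (1 + p) ^ #S * ∑ ω ∈ cylinderFinset R b, productWeight p ω := by
  have htilt : ∀ ω : E → Bool, productWeight p ω * 2 ^ #{e ∈ S | ω e = true} =
      ∏ e, bernoulliWeight p (ω e) * if e ∈ S ∧ ω e = true then 2 else 1 := by
    intro ω
    rw [prod_mul_distrib, ← prod_filter, prod_const, productWeight]
    congr 3
    ext e
    simp
  have hpow : (1 + p) ^ #S = ∏ e, if e ∈ S then 1 + p else 1 := by
    rw [← prod_filter, filter_mem_eq_inter, univ_inter, prod_const]
  rw [sum_congr rfl fun ω _ => htilt ω, sum_cylinderFinset_prod R b fun e x =>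
    bernoulliWeight p x * if e ∈ S ∧ x = true then 2 else 1]
  simp only [productWeight]
  rw [sum_cylinderFinset_prod R b fun _ x => bernoulliWeight p x, hpow, ← prod_mul_distrib]
  refine prod_congr rfl fun e _ => ?_
  by_cases heS : e ∈ S
  · have heR : e ∉ R := disjoint_right.mp hRS heS
    simp only [heR, heS, ↓reduceIte, bernoulliWeight, and_self, Bool.false_eq_true, and_false,
      mul_one]
    ring
  · simp [heS, bernoulliWeight]

lemma sum_le_sum_of_cylinderFinset_le {R : (E → Bool) → Finset E}
    (hR : ∀ ω₀ ω, ω ∈ cylinderFinset (R ω₀) ω₀ → R ω = R ω₀) {f g : (E → Bool) → ℝ}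
    (hfg : ∀ ω₀, ∑ ω ∈ cylinderFinset (R ω₀) ω₀, f ω ≤ ∑ ω ∈ cylinderFinset (R ω₀) ω₀, g ω) :
    ∑ ω, f ω ≤ ∑ ω, g ω := by
  let key : (E → Bool) → E → Option Bool := fun ω e => if e ∈ R ω then some (ω e) else none
  have hfiber : ∀ ω₀, ({ω | key ω = key ω₀} : Finset _) = cylinderFinset (R ω₀) ω₀ := by
    intro ω₀
    ext ω
    simp only [mem_filter, mem_univ, true_and]
    constructor
    · intro h
      refine mem_cylinderFinset.mpr fun e he => ?_
      have := congrFun h e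
      simp only [key, he, if_true] at this
      split_ifs at this
      simpa using this
    · intro h
      funext e
      simp only [key, hR ω₀ ω h]
      split_ifs with he
      · rw [mem_cylinderFinset.mp h e he]
      · rfl
  rw [← sum_fiberwise univ key f, ← sum_fiberwise univ key g]
  refine sum_le_sum fun y _ => ?_
  rcases ({ω | key ω = y} : Finset _).eq_empty_or_nonempty with hemp | ⟨ω₀, hω₀⟩
  · simp [hemp]
  · obtain rfl : key ω₀ = y := (mem_filter.mp hω₀).2
    rw [hfiber]
    exact hfg ω₀

end ProductWeight

section Exploration

variable {n : ℕ}

lemma exploreState_succ (G : SimpleGraph (Fin n)) (t : ℕ) :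
    exploreState G (t + 1) = exploreStep G (exploreState G t) :=
  Function.iterate_succ_apply' _ _ _

lemma exploreTarget_ne_explored {σ : Fin n → VStatus} {w : Fin n}
    (h : exploreTarget σ = some w) : σ w ≠ VStatus.explored := by
  unfold exploreTarget at h
  simp only at h
  split_ifs at h with hact hneu <;> cases h
  · simp [(mem_filter.mp (min'_mem _ hact)).2]
  · simp [(mem_filter.mp (min'_mem _ hneu)).2]

lemma exploreStep_apply_target {G : SimpleGraph (Fin n)} {σ : Fin n → VStatus} {w : Fin n}
    (h : exploreTarget σ = some w) : exploreStep G σ w = VStatus.explored := by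
  simp [exploreStep, h]

lemma exploreStep_apply_of_explored {G : SimpleGraph (Fin n)} {σ : Fin n → VStatus}
    {v : Fin n} (h : σ v = VStatus.explored) : exploreStep G σ v = VStatus.explored := by
  unfold exploreStep
  cases exploreTarget σ with
  | none => exact h
  | some w => simp [h]

lemma exploreState_explored_mono (G : SimpleGraph (Fin n)) {s t : ℕ} (hst : s ≤ t) {v : Fin n}
    (hv : exploreState G s v = VStatus.explored) : exploreState G t v = VStatus.explored := by
  induction t, hst using Nat.le_induction with
  | base => exact hv
  | succ t _ ih => rw [exploreState_succ]; exact exploreStep_apply_of_explored ih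

def freshEdges (σ : Fin n → VStatus) : Finset (Sym2 (Fin n)) :=
  match exploreTarget σ with
  | none => ∅
  | some w => (univ.filter fun v => σ v = VStatus.neutral ∧ v ≠ w).image fun v => s(w, v)

lemma mem_freshEdges {σ : Fin n → VStatus} {e : Sym2 (Fin n)} :
    e ∈ freshEdges σ ↔
      ∃ w v, exploreTarget σ = some w ∧ σ v = VStatus.neutral ∧ v ≠ w ∧ e = s(w, v) := by
  unfold freshEdges
  cases exploreTarget σ with
  | none => simp
  | some w => simp [eq_comm, and_assoc]

lemma disjoint_freshEdges_of_lt (G : SimpleGraph (Fin n)) {s t : ℕ} (hst : s < t) :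
    Disjoint (freshEdges (exploreState G t)) (freshEdges (exploreState G s)) := by
  rw [disjoint_left]
  intro e het hes
  obtain ⟨w, v, hw, hv, -, rfl⟩ := mem_freshEdges.mp het
  obtain ⟨w', v', hw', -, -, he⟩ := mem_freshEdges.mp hes
  have hexp : exploreState G t w' = VStatus.explored := by
    refine exploreState_explored_mono G hst ?_
    rw [exploreState_succ]
    exact exploreStep_apply_target hw'
  rcases Sym2.eq_iff.mp he with ⟨rfl, -⟩ | ⟨-, rfl⟩
  · exact exploreTarget_ne_explored hw hexp
  · rw [hv] at hexp
    cases hexp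

noncomputable def revealedEdges (G : SimpleGraph (Fin n)) (t : ℕ) : Finset (Sym2 (Fin n)) :=
  (range t).biUnion fun s => freshEdges (exploreState G s)

lemma disjoint_freshEdges_revealedEdges (G : SimpleGraph (Fin n)) (t : ℕ) :
    Disjoint (freshEdges (exploreState G t)) (revealedEdges G t) :=
  (disjoint_biUnion_right _ _ _).mpr fun _ hs => disjoint_freshEdges_of_lt G (mem_range.mp hs)

lemma exploreStep_graphOfConfig_congr {ω ω' : Sym2 (Fin n) → Bool} {σ : Fin n → VStatus}
    (h : ∀ e ∈ freshEdges σ, ω' e = ω e) :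
    exploreStep (graphOfConfig ω') σ = exploreStep (graphOfConfig ω) σ := by
  unfold exploreStep
  cases hw : exploreTarget σ with
  | none => rfl
  | some w =>
    funext v
    by_cases hv : σ v = VStatus.neutral
    · by_cases hvw : v = w
      · simp [hvw]
      · have := h _ (mem_freshEdges.mpr ⟨w, v, hw, hv, hvw, rfl⟩)
        simp [graphOfConfig, hv, hvw, this]
    · simp [hv]

variable {ω ω₀ : Sym2 (Fin n) → Bool} {t : ℕ}

lemma exploreState_eq_of_mem_cylinderFinset
    (h : ω ∈ cylinderFinset (revealedEdges (graphOfConfig ω₀) t) ω₀) {s : ℕ} (hs : s ≤ t) :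
    exploreState (graphOfConfig ω) s = exploreState (graphOfConfig ω₀) s := by
  induction s with
  | zero => rfl
  | succ s ih =>
    rw [exploreState_succ, exploreState_succ, ih (by omega)]
    refine exploreStep_graphOfConfig_congr fun e he => mem_cylinderFinset.mp h e ?_
    exact mem_biUnion.mpr ⟨s, mem_range.mpr hs, he⟩

lemma revealedEdges_eq_of_mem_cylinderFinset
    (h : ω ∈ cylinderFinset (revealedEdges (graphOfConfig ω₀) t) ω₀) :
    revealedEdges (graphOfConfig ω) t = revealedEdges (graphOfConfig ω₀) t :=
  biUnion_congr rfl fun s hs => by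
    rw [exploreState_eq_of_mem_cylinderFinset h (mem_range.mp hs).le]

end Exploration

section NonNeutral

variable {n : ℕ}

noncomputable def nonNeutralCount (G : SimpleGraph (Fin n)) (t : ℕ) : ℕ :=
  #{v | exploreState G t v ≠ VStatus.neutral}

lemma neutralCount_add_nonNeutralCount (G : SimpleGraph (Fin n)) (t : ℕ) :
    neutralCount G t + nonNeutralCount G t = n := by
  rw [neutralCount, nonNeutralCount, card_filter_add_card_filter_not, card_univ,
    Fintype.card_fin]

lemma nonNeutralCount_zero_le_one (G : SimpleGraph (Fin n)) : nonNeutralCount G 0 ≤ 1 := by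
  refine card_le_one.mpr fun a ha b hb => Fin.ext ?_
  simp only [exploreState, Function.iterate_zero, id_eq, ne_eq, ite_eq_right_iff, reduceCtorEq,
    imp_false, Decidable.not_not, mem_filter, mem_univ, true_and] at ha hb
  omega

lemma card_freshEdges_le (σ : Fin n → VStatus) : #(freshEdges σ) ≤ n := by
  unfold freshEdges
  cases exploreTarget σ with
  | none => simp
  | some w => exact card_image_le.trans ((card_filter_le _ _).trans (by simp))

lemma card_nonNeutral_exploreStep_le (ω : Sym2 (Fin n) → Bool) (σ : Fin n → VStatus) :
    #{v | exploreStep (graphOfConfig ω) σ v ≠ VStatus.neutral} ≤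
      #{v | σ v ≠ VStatus.neutral} + 1 + #{e ∈ freshEdges σ | ω e = true} := by
  cases hw : exploreTarget σ with
  | none =>
    simp only [exploreStep, hw]
    omega
  | some w =>
    let found : Finset (Fin n) := {v | σ v = VStatus.neutral ∧ v ≠ w ∧ ω s(w, v) = true}
    have hsub : ({v | exploreStep (graphOfConfig ω) σ v ≠ VStatus.neutral} : Finset _) ⊆
        ({v | σ v ≠ VStatus.neutral} : Finset _) ∪ insert w found := by
      intro v hv
      replace hv := (mem_filter.mp hv).2
      simp only [exploreStep, hw] at hv
      simp only [mem_union, mem_insert, mem_filter, mem_univ, true_and, found]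
      split_ifs at hv with h₁ h₂
      · exact Or.inr (Or.inl h₁)
      · exact Or.inr (Or.inr ⟨h₂.1, Ne.symm h₂.2.1, h₂.2.2⟩)
      · exact Or.inl hv
    have hfound : #found ≤ #{e ∈ freshEdges σ | ω e = true} := by
      refine card_le_card_of_injOn (fun v => s(w, v)) (fun v hv => ?_) fun u _ v _ huv => ?_
      · simp only [found, coe_filter, mem_univ, true_and] at hv
        exact mem_filter.mpr ⟨mem_freshEdges.mpr ⟨w, v, hw, hv.1, hv.2.1, rfl⟩, hv.2.2⟩
      · exact Sym2.congr_right.mp huv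
    calc _ ≤ #(({v | σ v ≠ VStatus.neutral} : Finset _) ∪ insert w found) := card_le_card hsub
      _ ≤ #({v | σ v ≠ VStatus.neutral} : Finset _) + (#found + 1) :=
        (card_union_le _ _).trans (Nat.add_le_add_left (card_insert_le _ _) _)
      _ ≤ _ := by omega

lemma nonNeutralCount_succ_le (ω : Sym2 (Fin n) → Bool) (t : ℕ) :
    nonNeutralCount (graphOfConfig ω) (t + 1) ≤ nonNeutralCount (graphOfConfig ω) t + 1 +
      #{e ∈ freshEdges (exploreState (graphOfConfig ω) t) | ω e = true} := by
  rw [nonNeutralCount, exploreState_succ]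
  exact card_nonNeutral_exploreStep_le ω _

end NonNeutral

section Moment

variable {n : ℕ} {p : ℝ}

lemma sum_cylinderFinset_two_pow_nonNeutralCount_succ_le (hp0 : 0 ≤ p) (hp1 : p ≤ 1)
    (ω₀ : Sym2 (Fin n) → Bool) (t : ℕ) :
    ∑ ω ∈ cylinderFinset (revealedEdges (graphOfConfig ω₀) t) ω₀,
        productWeight p ω * 2 ^ nonNeutralCount (graphOfConfig ω) (t + 1) ≤
      ∑ ω ∈ cylinderFinset (revealedEdges (graphOfConfig ω₀) t) ω₀,
        2 * (1 + p) ^ n * (productWeight p ω * 2 ^ nonNeutralCount (graphOfConfig ω) t) := by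
  set C := cylinderFinset (revealedEdges (graphOfConfig ω₀) t) ω₀
  set σ := exploreState (graphOfConfig ω₀) t
  set y := nonNeutralCount (graphOfConfig ω₀) t
  have hstate : ∀ ω ∈ C, exploreState (graphOfConfig ω) t = σ := fun ω hω =>
    exploreState_eq_of_mem_cylinderFinset hω le_rfl
  have hy : ∀ ω ∈ C, nonNeutralCount (graphOfConfig ω) t = y := fun ω hω => by
    rw [nonNeutralCount, hstate ω hω]
    rfl
  have hstep : ∀ ω ∈ C, productWeight p ω * 2 ^ nonNeutralCount (graphOfConfig ω) (t + 1) ≤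
      2 ^ (y + 1) * (productWeight p ω * 2 ^ #{e ∈ freshEdges σ | ω e = true}) := by
    intro ω hω
    have := nonNeutralCount_succ_le ω t
    rw [hstate ω hω, hy ω hω] at this
    rw [mul_left_comm, ← pow_add]
    exact mul_le_mul_of_nonneg_left (pow_le_pow_right₀ one_le_two this)
      (productWeight_nonneg hp0 hp1 ω)
  have hC : 0 ≤ ∑ ω ∈ C, productWeight p ω := sum_nonneg fun ω _ => productWeight_nonneg hp0 hp1 ω
  calc _ ≤ ∑ ω ∈ C, 2 ^ (y + 1) * (productWeight p ω * 2 ^ #{e ∈ freshEdges σ | ω e = true}) :=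
        sum_le_sum hstep
    _ = 2 ^ (y + 1) * ((1 + p) ^ #(freshEdges σ) * ∑ ω ∈ C, productWeight p ω) := by
      rw [← mul_sum, sum_cylinderFinset_productWeight_mul_two_pow
        (disjoint_freshEdges_revealedEdges _ t).symm]
    _ ≤ 2 ^ (y + 1) * ((1 + p) ^ n * ∑ ω ∈ C, productWeight p ω) := by
      gcongr
      · linarith
      · exact card_freshEdges_le σ
    _ = ∑ ω ∈ C, 2 * (1 + p) ^ n * (productWeight p ω * 2 ^ y) := by
      rw [← mul_sum, ← sum_mul]
      ring
    _ = _ := sum_congr rfl fun ω hω => by rw [hy ω hω]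

lemma sum_productWeight_mul_two_pow_nonNeutralCount_le (hp0 : 0 ≤ p) (hp1 : p ≤ 1) (t : ℕ) :
    ∑ ω : Sym2 (Fin n) → Bool, productWeight p ω * 2 ^ nonNeutralCount (graphOfConfig ω) t ≤
      2 * (2 * (1 + p) ^ n) ^ t := by
  induction t with
  | zero =>
    calc _ ≤ ∑ ω : Sym2 (Fin n) → Bool, productWeight p ω * 2 ^ 1 :=
          sum_le_sum fun ω _ => mul_le_mul_of_nonneg_left
            (pow_le_pow_right₀ one_le_two (nonNeutralCount_zero_le_one _))
            (productWeight_nonneg hp0 hp1 ω)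
      _ = _ := by rw [← sum_mul, sum_productWeight]; ring
  | succ t ih =>
    calc _ ≤ ∑ ω : Sym2 (Fin n) → Bool,
          2 * (1 + p) ^ n * (productWeight p ω * 2 ^ nonNeutralCount (graphOfConfig ω) t) :=
          sum_le_sum_of_cylinderFinset_le (fun _ _ => revealedEdges_eq_of_mem_cylinderFinset)
            fun ω₀ => sum_cylinderFinset_two_pow_nonNeutralCount_succ_le hp0 hp1 ω₀ t
      _ ≤ 2 * (1 + p) ^ n * (2 * (2 * (1 + p) ^ n) ^ t) := by
          rw [← mul_sum]
          gcongr
      _ = _ := by ring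

end Moment

lemma sum_filter_le_le_sum_mul_pow_div {ι : Type*} (s : Finset ι) {w : ι → ℝ}
    (hw : ∀ i ∈ s, 0 ≤ w i) {a : ℝ} (ha : 1 ≤ a) (Y : ι → ℕ) (k : ℕ) :
    ∑ i ∈ s with k ≤ Y i, w i ≤ (∑ i ∈ s, w i * a ^ Y i) / a ^ k := by
  rw [le_div_iff₀ (by positivity), sum_mul]
  calc _ ≤ ∑ i ∈ s with k ≤ Y i, w i * a ^ Y i :=
        sum_le_sum fun i hi => mul_le_mul_of_nonneg_left
          (pow_le_pow_right₀ ha (mem_filter.mp hi).2) (hw i (mem_filter.mp hi).1)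
    _ ≤ _ := sum_le_sum_of_subset_of_nonneg (filter_subset _ s) fun i hi _ =>
        mul_nonneg (hw i hi) (by positivity)

/-- As `(1 + p) ^ m ≤ e ^ (pm) ≤ e ^ 2`, the left side is at most `2 (e ^ 2 / 16) ^ t`, and
`e ^ 2 / 16 < 1 / 2`. -/
lemma two_mul_two_mul_one_add_pow_pow_div_le {p : ℝ} {m t : ℕ} (hp0 : 0 ≤ p) (hpm : p * m ≤ 2)
    (ht : 1 ≤ t) :
    2 * (2 * (1 + p) ^ m) ^ t / 2 ^ (5 * t) ≤ Real.exp (-(1 / 100) * t) := by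
  have hexp : (1 + p) ^ m ≤ Real.exp 2 := calc
    (1 + p) ^ m ≤ Real.exp p ^ m := by gcongr; linarith [Real.add_one_le_exp p]
    _ = Real.exp (p * m) := by rw [← Real.exp_nat_mul, mul_comm]
    _ ≤ Real.exp 2 := Real.exp_le_exp.mpr hpm
  have hlog := Real.log_two_gt_d9
  have ht' : (1 : ℝ) ≤ t := by exact_mod_cast ht
  rw [div_le_iff₀ (by positivity)]
  calc 2 * (2 * (1 + p) ^ m) ^ t ≤ 2 * (2 * Real.exp 2) ^ t := by gcongr
    _ = Real.exp (Real.log 2 + t * (Real.log 2 + 2)) := by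
      rw [Real.exp_add, Real.exp_nat_mul, Real.exp_add, Real.exp_log two_pos]
    _ ≤ Real.exp (-(1 / 100) * t + (5 * t : ℕ) * Real.log 2) := by
      refine Real.exp_le_exp.mpr ?_
      push_cast
      nlinarith
    _ = Real.exp (-(1 / 100) * t) * 2 ^ (5 * t) := by
      rw [Real.exp_add, Real.exp_nat_mul, Real.exp_log two_pos]

/-- **Lemma 3 of Nachmias–Peres.**  There is a constant `c > 0` such that for every `n`, every
edge probability `p ≤ 2/n` and every positive integer `t`, the number `N_t` of neutral vertices
after `t` steps of the exploration process of `G(n,p)` satisfies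
`P(N_t ≤ n - 5t) ≤ e^{-ct}`. -/
theorem exploration_neutral_lower_bound :
    ∃ c : ℝ, 0 < c ∧ ∀ (n : ℕ) (p : ℝ), 0 ≤ p → p ≤ 2 / n → ∀ t : ℕ, 0 < t →
      gnp n p {ω | (neutralCount (graphOfConfig ω) t : ℤ) ≤ (n : ℤ) - 5 * t} ≤
        ENNReal.ofReal (Real.exp (-c * t)) := by
  refine ⟨1 / 100, by norm_num, fun n p hp0 hp2 t ht => ?_⟩
  have hevent : {ω : Sym2 (Fin n) → Bool |
      (neutralCount (graphOfConfig ω) t : ℤ) ≤ (n : ℤ) - 5 * t} =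
      ↑({ω | 5 * t ≤ nonNeutralCount (graphOfConfig ω) t} : Finset (Sym2 (Fin n) → Bool)) := by
    ext ω
    have := neutralCount_add_nonNeutralCount (graphOfConfig ω) t
    simp only [Set.mem_ofPred_eq, coe_filter, mem_univ, true_and]
    omega
  rcases lt_or_ge n (5 * t) with hn | hn
  · rw [hevent, filter_false_of_mem fun ω _ => ?_]
    · simp
    · have := neutralCount_add_nonNeutralCount (graphOfConfig ω) t
      omega
  have hn' : (5 : ℝ) ≤ n := by exact_mod_cast (by omega : 5 ≤ n)
  have hpn : p * n ≤ 2 := by rwa [le_div_iff₀ (by linarith)] at hp2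
  have hp1 : p ≤ 1 := by nlinarith
  rw [hevent, gnp, pi_bernoulliMeasure_finset hp0 hp1]
  refine ENNReal.ofReal_le_ofReal ?_
  calc _ ≤ (∑ ω, productWeight p ω * 2 ^ nonNeutralCount (graphOfConfig ω) t) / 2 ^ (5 * t) :=
        sum_filter_le_le_sum_mul_pow_div _ (fun ω _ => productWeight_nonneg hp0 hp1 ω)
          one_le_two _ _
    _ ≤ 2 * (2 * (1 + p) ^ n) ^ t / 2 ^ (5 * t) := by
        gcongr
        exact sum_productWeight_mul_two_pow_nonNeutralCount_le hp0 hp1 t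
    _ ≤ _ := two_mul_two_mul_one_add_pow_pow_div_le hp0 hpn ht
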